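/- For every nondeterministic finite automaton A over the four-letter alphabet Σ = {A, U, C, G} (with finitely many states), there exist a word w ∈ Σ*, an involutive letter map θ : Σ → Σ (θ ∘ θ = id), a logarithmic factor c ≥ 1, a finite context set C ⊆ Σ* × Σ*, a margin n ∈ ℕ, a finite set T ⊆ Σ* of terminating sequences, and a terminating stem length m ≥ 1, such that the set of all words obtainable from the circular word w^ω by terminating maximally parallel logarithmically-bounded hairpin deletion with respect to these parameters is exactly the language L(A) accepted by A. -/

import Mathlib

/-- The four-letter RNA alphabet `Σ = {A, U, C, G}`. -/
inductive RNABase : Type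
  | A | U | C | G
deriving DecidableEq

/-- The antimorphic extension of a letter map `θ` to words:
`θ̄(v)` is the reverse of the letterwise image of `v` under `θ`. -/
def thetaBar (θ : RNABase → RNABase) (v : List RNABase) : List RNABase :=
  (v.map θ).reverse

/-- `v` is a deletable block (w.r.t. `θ`, logarithmic factor `c`, context set `C`, and
margin `n`): `v = α ++ x ++ ℓ ++ θ̄(α ++ x) ++ z ++ β` for some `(α, β) ∈ C` and words
`x, ℓ, z` with `|α ++ x| ≥ c · log₂ |ℓ|` and `|z| ≤ n`. -/
def DeletableBlock (θ : RNABase → RNABase) (c : ℕ)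
    (C : Set (List RNABase × List RNABase)) (n : ℕ) (v : List RNABase) : Prop :=
  ∃ α β x ℓ z : List RNABase, (α, β) ∈ C ∧
    v = α ++ x ++ ℓ ++ thetaBar θ (α ++ x) ++ z ++ β ∧
    c * Nat.log 2 ℓ.length ≤ (α ++ x).length ∧
    z.length ≤ n

/-- `u` is obtained from `v` by maximally parallel log-hairpin deletion:
`v = u₁ ++ α₁ ++ ⋯ ++ u_M ++ α_M ++ u_{M+1}` and `u = u₁ ++ ⋯ ++ u_{M+1}`, where each
`α_i` is a deletable block, no left context of `C` occurs as a factor of any `u_i`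
(`1 ≤ i ≤ M`), and `u_{M+1}` contains no deletable block as a factor. -/
def MaxParObtained (θ : RNABase → RNABase) (c : ℕ)
    (C : Set (List RNABase × List RNABase)) (n : ℕ) (v u : List RNABase) : Prop :=
  ∃ (ps : List (List RNABase × List RNABase)) (ulast : List RNABase),
    v = (ps.map fun p => p.1 ++ p.2).flatten ++ ulast ∧
    u = (ps.map Prod.fst).flatten ++ ulast ∧
    (∀ p ∈ ps, DeletableBlock θ c C n p.2) ∧
    (∀ p ∈ ps, ∀ ab ∈ C, ¬ ab.1 <:+: p.1) ∧
    (∀ b : List RNABase, DeletableBlock θ c C n b → ¬ b <:+: ulast)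

/-- `r` is obtainable from the circular word `w^ω` by terminating maximally parallel
log-hairpin deletion: for some `K`, `t ∈ T`, `w' ++ t` is a prefix of `w^K`, some `u`
is obtained from `w'` by maximally parallel log-hairpin deletion, and
`u = r ++ x ++ θ̄(x)` with `|x| = m` (terminating stem of length `2 m`). -/
def TermObtainable (w : List RNABase) (θ : RNABase → RNABase) (c : ℕ)
    (C : Set (List RNABase × List RNABase)) (n : ℕ)
    (T : Set (List RNABase)) (m : ℕ) (r : List RNABase) : Prop :=
  ∃ (K : ℕ) (t w' : List RNABase), t ∈ T ∧
    (w' ++ t) <+: (List.replicate K w).flatten ∧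
    ∃ u x : List RNABase, MaxParObtained θ c C n w' u ∧
      x.length = m ∧ u = r ++ x ++ thetaBar θ x

/-!
Take `θ = id` and encode every mark of the construction as a marker `A Cᵏ A` with its own
`k ≥ 2`. Markers are palindromes, so for a context `(α, β)` the word `α α z β` is a hairpin with
empty loop, deletable whenever `|z| ≤ n`. As no two `C` letters are adjacent outside markers,
markers can be read off unambiguously from any suffix of `w^K`.

After a start piece, the template `w` has one piece per state–letter pair `(q, a)`: an entry
marker, the letter `a`, and a doubled lead marker. The contexts let the hairpin opened after
`(q, a)` close at the entry of `(q', a')` (in the next copy of `w`, whence `n = 2|w|`) exactly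
when `q' ∈ δ(q, a)`, or at the final piece `G G terminator` when `δ(q, a)` meets the accepting
states. Every lead marker is a left context, so maximal parallelism makes each hairpin open right
after the previous kept letter, and the kept letters are those read along a run. Every piece also
carries a filler block that can always be deleted, so what remains before the terminator can only
be the stem `GG`.
-/

section MaxParDel

variable (θ : RNABase → RNABase) (c : ℕ) (C : Set (List RNABase × List RNABase)) (n : ℕ)

inductive MaxParDel : List RNABase → List RNABase → Prop
  | last {v : List RNABase} : (∀ b, DeletableBlock θ c C n b → ¬ b <:+: v) → MaxParDel v v
  | cons {u₁ α v u : List RNABase} : DeletableBlock θ c C n α → (∀ ab ∈ C, ¬ ab.1 <:+: u₁) →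
      MaxParDel v u → MaxParDel (u₁ ++ α ++ v) (u₁ ++ u)

variable {θ c C n}

theorem maxParObtained_iff_maxParDel {v u : List RNABase} :
    MaxParObtained θ c C n v u ↔ MaxParDel θ c C n v u := by
  constructor
  · rintro ⟨ps, ulast, rfl, rfl, hdel, hctx, hlast⟩
    induction ps with
    | nil => simpa using MaxParDel.last hlast
    | cons p ps ih =>
      rw [List.forall_mem_cons] at hdel hctx
      simpa using MaxParDel.cons hdel.1 hctx.1 (ih hdel.2 hctx.2)
  · intro h
    induction h with
    | last hlast => exact ⟨[], _, by simp, by simp, by simp, by simp, hlast⟩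
    | @cons u₁ α v u hα hu₁ _ ih =>
      obtain ⟨ps, ulast, rfl, rfl, hdel, hctx, hlast⟩ := ih
      refine ⟨(u₁, α) :: ps, ulast, by simp, by simp, ?_, ?_, hlast⟩
      · exact List.forall_mem_cons.mpr ⟨hα, hdel⟩
      · exact List.forall_mem_cons.mpr ⟨hu₁, hctx⟩

end MaxParDel

theorem NFA.mem_acceptsFrom_iff_exists {α σ : Type*} {M : NFA α σ} {S : Set σ} {x : List α} :
    x ∈ M.acceptsFrom S ↔ ∃ q ∈ S, x ∈ M.acceptsFrom {q} := by
  simp only [NFA.mem_acceptsFrom, NFA.mem_evalFrom_iff_exists (S := S)]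
  constructor <;> rintro ⟨s, hs, t, ht, h⟩ <;> exact ⟨t, ht, s, hs, h⟩

namespace List

variable {α : Type*}

def FollowedBy (x : α) (s l : List α) : Prop := ∀ l₁ l₂, l = l₁ ++ x :: l₂ → s <+: l₂

variable {x : α} {s l l₁ l₂ : List α}

lemma followedBy_of_not_mem (h : x ∉ l) : FollowedBy x s l := by
  rintro l₁ l₂ rfl
  simp at h

lemma followedBy_cons_self (h : x ∉ l) : FollowedBy x l (x :: l) := by
  rintro (_ | ⟨y, l₁⟩) l₂ he
  · simp_all
  · simp only [cons_append, cons.injEq] at he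
    simp [he.2] at h

lemma FollowedBy.append (h₁ : FollowedBy x s l₁) (h₂ : FollowedBy x s l₂) :
    FollowedBy x s (l₁ ++ l₂) := by
  intro m₁ m₂ he
  rcases append_eq_append_iff.mp he with ⟨a, -, he⟩ | ⟨c, hl₁, he⟩
  · exact h₂ a m₂ he
  · rcases c with _ | ⟨y, c⟩
    · exact h₂ [] m₂ he.symm
    · simp only [cons_append, cons.injEq] at he
      obtain ⟨rfl, rfl⟩ := he
      exact (h₁ m₁ c hl₁).trans (prefix_append c l₂)

lemma FollowedBy.flatten {L : List (List α)} (h : ∀ l ∈ L, FollowedBy x s l) :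
    FollowedBy x s L.flatten := by
  induction L with
  | nil => exact followedBy_of_not_mem (by simp)
  | cons l L ih =>
    exact (h l mem_cons_self).append (ih fun l' hl' => h l' (mem_cons_of_mem _ hl'))

lemma FollowedBy.of_append_right (h : FollowedBy x s (l₁ ++ l₂)) : FollowedBy x s l₂ := by
  rintro m₁ m₂ rfl
  exact h (l₁ ++ m₁) m₂ (by simp)

lemma prefix_of_append_cons_eq {δ t pre rest : List α} (h : δ ++ x :: t = pre ++ rest)
    (hx : x ∉ pre) : pre <+: δ := by
  rcases append_eq_append_iff.mp h with ⟨a, hpre, h⟩ | ⟨c, rfl, -⟩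
  · rcases a with _ | ⟨y, a⟩
    · simp [hpre]
    · simp only [cons_append, cons.injEq] at h
      simp [hpre, ← h.1] at hx
  · exact prefix_append pre c

lemma eq_of_append_cons_eq_append_cons {x₁ x₂ z₁ z₂ : List α} {a₁ a₂ : α}
    (h : x₁ ++ a₁ :: z₁ = x₂ ++ a₂ :: z₂) (h₁ : a₁ ∉ x₂) (h₂ : a₂ ∉ x₁) :
    x₁ = x₂ ∧ a₁ = a₂ ∧ z₁ = z₂ := by
  have h₁₂ := prefix_of_append_cons_eq h h₁
  have h₂₁ := prefix_of_append_cons_eq h.symm h₂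
  obtain rfl := h₂₁.eq_of_length (h₁₂.length_le.antisymm h₂₁.length_le).symm
  simpa using h

lemma isChain_flatten_of_forall_getLast {R : α → α → Prop} {L : List (List α)}
    (h : ∀ l ∈ L, IsChain R l ∧ ∀ x ∈ l.getLast?, ∀ y, R x y) : IsChain R L.flatten := by
  induction L with
  | nil => exact .nil
  | cons l L ih =>
    obtain ⟨hl, hlast⟩ := h l mem_cons_self
    exact hl.append (ih fun l' hl' => h l' (mem_cons_of_mem _ hl')) fun x hx y _ => hlast x hx y

end List

namespace HairpinNFA

open List

instance : Fintype RNABase := ⟨{.A, .U, .C, .G}, fun x => by cases x <;> simp⟩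

def marker (k : ℕ) : List RNABase := .A :: replicate k .C ++ [.A]

@[simp] lemma length_marker (k : ℕ) : (marker k).length = k + 2 := by simp [marker]

@[simp] lemma reverse_marker (k : ℕ) : (marker k).reverse = marker k := by simp [marker]

lemma A_mem_marker (k : ℕ) : RNABase.A ∈ marker k := by simp [marker]

lemma marker_append_inj {j k : ℕ} {u v : List RNABase} (h : marker j ++ u = marker k ++ v) :
    j = k ∧ u = v := by
  simp only [marker, cons_append, append_assoc, cons.injEq, true_and] at h
  have hidx := congrArg (idxOf RNABase.A) h
  simp only [idxOf_append_of_notMem (by simp [mem_replicate] : RNABase.A ∉ replicate _ .C),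
    idxOf_cons_self, length_replicate, add_zero] at hidx
  subst hidx
  simpa using h

inductive Tok
  | mark (k : ℕ)
  | letter (a : RNABase)

def Tok.word : Tok → List RNABase
  | mark k => marker k
  | letter a => [a]

def flat (ts : List Tok) : List RNABase := ts.flatMap Tok.word

@[simp] lemma flat_nil : flat [] = [] := rfl

@[simp] lemma flat_cons (t : Tok) (ts : List Tok) : flat (t :: ts) = t.word ++ flat ts := rfl

@[simp] lemma flat_append (ts ts' : List Tok) : flat (ts ++ ts') = flat ts ++ flat ts' :=
  flatMap_append

@[simp] lemma flat_map_letter (y : List RNABase) : flat (y.map .letter) = y := by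
  induction y <;> simp_all [Tok.word]

lemma infix_flat_of_infix {ts ts' : List Tok} (h : ts <:+: ts') : flat ts <:+: flat ts' := by
  obtain ⟨s, t, rfl⟩ := h
  exact ⟨flat s, flat t, by simp⟩

lemma infix_flat_of_mem {t : Tok} {ts : List Tok} (h : t ∈ ts) : t.word <:+: flat ts := by
  obtain ⟨s, s', rfl⟩ := append_of_mem h
  exact ⟨flat s, flat s', by simp⟩

/-- Two tokens spell `CC` only as two `C` letters; forbidding that makes markers unambiguous. -/
def Tok.NotBothC (t t' : Tok) : Prop := t = .letter .C → t' ≠ .letter .C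

lemma Tok.word_append_eq_C_cons {t : Tok} {l l' : List RNABase} (h : t.word ++ l = .C :: l') :
    t = .letter .C ∧ l = l' := by
  cases t <;> simp_all [Tok.word, marker]

lemma flat_ne_C_C_cons {ts : List Tok} (hts : IsChain Tok.NotBothC ts) (l : List RNABase) :
    flat ts ≠ .C :: .C :: l := by
  intro h
  match ts, hts with
  | t :: t' :: ts, hts =>
    rw [flat_cons] at h
    obtain ⟨rfl, h'⟩ := Tok.word_append_eq_C_cons h
    rw [flat_cons] at h'
    obtain ⟨rfl, -⟩ := Tok.word_append_eq_C_cons h'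
    exact (isChain_cons_cons.mp hts).1 rfl rfl
  | [t], _ => cases t <;> simp [Tok.word, marker] at h
  | [], _ => simp at h

lemma flat_ne_replicate_C {ts : List Tok} (hts : IsChain Tok.NotBothC ts) {k : ℕ} (hk : 2 ≤ k)
    (l : List RNABase) : flat ts ≠ replicate k .C ++ l := by
  obtain ⟨k, rfl⟩ := Nat.exists_eq_add_of_le' hk
  simpa [replicate_succ] using flat_ne_C_C_cons hts (replicate k .C ++ l)

lemma eq_nil_of_append_A_cons_eq {s c : List RNABase} {j : ℕ}
    (h : s ++ .A :: c = replicate j .C ++ [.A]) : c = [] := by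
  rcases eq_nil_or_concat c with rfl | ⟨c, y, rfl⟩
  · rfl
  · have h₁ : (s ++ .A :: c) ++ [y] = replicate j .C ++ [.A] := by simpa using h
    have hA : RNABase.A ∈ replicate j .C :=
      (append_inj' h₁ rfl).1 ▸ mem_append_right s mem_cons_self
    simp [mem_replicate] at hA

lemma exists_mark_of_flat_eq {k : ℕ} (hk : 2 ≤ k) :
    ∀ {ts : List Tok} {s₁ s₂ : List RNABase}, IsChain Tok.NotBothC ts →
      flat ts = s₁ ++ marker k ++ s₂ →
      ∃ ts₁ ts₂, ts = ts₁ ++ .mark k :: ts₂ ∧ flat ts₁ = s₁ ∧ flat ts₂ = s₂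
  | [], s₁, s₂, _, h => by simp [marker] at h
  | t :: ts, s₁, s₂, hts, h => by
    rw [flat_cons, append_assoc, append_eq_append_iff] at h
    rcases h with ⟨s₁', rfl, h⟩ | ⟨c, hc, h⟩
    · obtain ⟨ts₁, ts₂, rfl, rfl, rfl⟩ := exists_mark_of_flat_eq hk hts.tail (by simpa using h)
      exact ⟨t :: ts₁, ts₂, rfl, rfl, rfl⟩
    rcases c with _ | ⟨x, c⟩
    · obtain ⟨ts₁, ts₂, rfl, h₁, rfl⟩ :=
        exists_mark_of_flat_eq hk hts.tail (s₁ := []) (by simpa using h.symm)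
      exact ⟨t :: ts₁, ts₂, rfl, by simp [hc, h₁], rfl⟩
    -- the marker starts strictly inside `t`, at one of its letters `A`
    simp only [marker, cons_append, append_assoc, cons.injEq] at h
    obtain ⟨rfl, h⟩ := h
    have hrest : flat ts ≠ replicate k .C ++ .A :: s₂ := flat_ne_replicate_C hts.tail hk _
    cases t with
    | letter a =>
      rcases s₁ with _ | ⟨y, s₁⟩
      · simp only [Tok.word, nil_append, cons.injEq] at hc
        obtain ⟨-, rfl⟩ := hc
        exact (hrest (by simpa using h.symm)).elim
      · simp [Tok.word] at hc
    | mark j =>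
      rcases s₁ with _ | ⟨y, s₁⟩
      · simp only [Tok.word, marker, nil_append, cons_append, cons.injEq, true_and] at hc
        subst hc
        obtain ⟨rfl, rfl⟩ := marker_append_inj
          (u := flat ts) (v := s₂) (by simpa [marker] using h.symm)
        exact ⟨[], ts, rfl, rfl, rfl⟩
      · simp only [Tok.word, marker, cons_append, cons.injEq] at hc
        obtain rfl := eq_nil_of_append_A_cons_eq hc.2.symm
        exact (hrest (by simpa using h.symm)).elim

inductive Pos (τ : Type)
  | start
  | slot (q : τ) (a : RNABase)
  | final
deriving Fintype

/-- `lead p` opens the hairpin leaving position `p`, `entry p` closes the one entering it, and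
`fill fill fillEnd` is a block that can always be deleted. -/
inductive Mark (τ : Type)
  | lead (p : Pos τ)
  | entry (p : Pos τ)
  | fill
  | fillEnd
  | dead
deriving Fintype

section Reads

variable {τ : Type} (A : NFA RNABase τ)

open Pos

def Pos.kept : Pos τ → List RNABase
  | start => []
  | slot _ a => [a]
  | final => [.G, .G]

lemma Pos.length_kept_le (p : Pos τ) : p.kept.length ≤ 2 := by cases p <;> simp [Pos.kept]

inductive Edge : Pos τ → Pos τ → Prop
  | start_slot {q : τ} (hq : q ∈ A.start) (a : RNABase) : Edge start (slot q a)
  | start_final {q : τ} (hq : q ∈ A.start) (hq' : q ∈ A.accept) : Edge start final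
  | slot_slot {q q' : τ} {a : RNABase} (h : q' ∈ A.step q a) (a' : RNABase) :
      Edge (slot q a) (slot q' a')
  | slot_final {q q' : τ} {a : RNABase} (h : q' ∈ A.step q a) (h' : q' ∈ A.accept) :
      Edge (slot q a) final

/-- `Reads A p u`: `u` is the word kept when the deletion starts at position `p`. -/
inductive Reads : Pos τ → List RNABase → Prop
  | final : Reads final [.G, .G]
  | edge {p p' : Pos τ} {u : List RNABase} : Edge A p p' → Reads p' u → Reads p (p.kept ++ u)

/-- The contexts, as pairs of marks. The mark `dead` never occurs in the template: `Rule.dead`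
only makes every lead mark a left context. -/
inductive Rule : Mark τ → Mark τ → Prop
  | edge {p p' : Pos τ} : Edge A p p' → Rule (Mark.lead p) (Mark.entry p')
  | filler : Rule Mark.fill Mark.fillEnd
  | dead (p : Pos τ) : Rule (Mark.lead p) Mark.dead

def Pos.lang : Pos τ → Set (List RNABase)
  | start => A.accepts
  | slot q a => {y | ∃ y' ∈ A.acceptsFrom (A.step q a), y = a :: y'}
  | final => {[]}

variable {A}

lemma Edge.ne_start {p p' : Pos τ} (e : Edge A p p') : p' ≠ start := by
  cases e <;> simp

lemma Rule.eq_dead_or_edge {p : Pos τ} {m : Mark τ} (h : Rule A (Mark.lead p) m) :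
    m = Mark.dead ∨ ∃ p', Edge A p p' ∧ m = Mark.entry p' := by
  cases h with
  | edge e => exact .inr ⟨_, e, rfl⟩
  | dead => exact .inl rfl

lemma Edge.kept_append_mem_lang {p p' : Pos τ} (e : Edge A p p') {y : List RNABase}
    (hy : y ∈ p'.lang A) : p.kept ++ y ∈ p.lang A := by
  cases e with
  | @start_slot q hq a =>
    obtain ⟨y, hy, rfl⟩ := hy
    show a :: y ∈ A.accepts
    rw [NFA.accepts_eq_acceptsFrom_start, NFA.mem_acceptsFrom_iff_exists]
    exact ⟨q, hq, by simpa [NFA.stepSet_singleton] using hy⟩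
  | @start_final q hq hq' =>
    obtain rfl : y = [] := hy
    exact (NFA.nil_mem_acceptsFrom A).mpr ⟨q, hq, hq'⟩
  | @slot_slot q q' a h a' =>
    obtain ⟨y, hy, rfl⟩ := hy
    exact ⟨a' :: y, NFA.mem_acceptsFrom_iff_exists.mpr
      ⟨q', h, by simpa [NFA.stepSet_singleton] using hy⟩, rfl⟩
  | @slot_final q q' a h h' =>
    obtain rfl : y = [] := hy
    exact ⟨[], (NFA.nil_mem_acceptsFrom A).mpr ⟨q', h, h'⟩, rfl⟩

lemma Reads.exists_mem_lang {p : Pos τ} {u : List RNABase} (h : Reads A p u) :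
    ∃ y ∈ p.lang A, u = y ++ [.G, .G] := by
  induction h with
  | final => exact ⟨[], rfl, rfl⟩
  | edge e _ ih =>
    obtain ⟨y, hy, rfl⟩ := ih
    exact ⟨_, e.kept_append_mem_lang hy, by simp⟩

lemma reads_slot_of_mem_acceptsFrom {y : List RNABase} :
    ∀ {q : τ} {a : RNABase}, y ∈ A.acceptsFrom (A.step q a) →
      Reads A (slot q a) (a :: y ++ [.G, .G]) := by
  induction y with
  | nil =>
    intro q a hy
    obtain ⟨q', hq', hacc⟩ := (NFA.nil_mem_acceptsFrom A).mp hy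
    exact .edge (.slot_final hq' hacc) .final
  | cons a' y ih =>
    intro q a hy
    obtain ⟨q', hq', hy⟩ := NFA.mem_acceptsFrom_iff_exists.mp hy
    exact .edge (.slot_slot hq' a') (ih (by simpa [NFA.stepSet_singleton] using hy))

lemma reads_start_of_mem_accepts {r : List RNABase} (hr : r ∈ A.accepts) :
    Reads A start (r ++ [.G, .G]) := by
  rw [NFA.accepts_eq_acceptsFrom_start] at hr
  cases r with
  | nil =>
    obtain ⟨q, hq, hacc⟩ := (NFA.nil_mem_acceptsFrom A).mp hr
    exact .edge (.start_final hq hacc) .final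
  | cons a y =>
    obtain ⟨q, hq, hy⟩ := NFA.mem_acceptsFrom_iff_exists.mp hr
    exact .edge (.start_slot hq a)
      (reads_slot_of_mem_acceptsFrom (by simpa [NFA.stepSet_singleton] using hy))

end Reads

noncomputable section

variable {τ : Type} [Fintype τ]

open Pos Mark

def Mark.code (m : Mark τ) : ℕ := Fintype.equivFin (Mark τ) m + 2

lemma Mark.two_le_code (m : Mark τ) : 2 ≤ m.code := Nat.le_add_left 2 _

lemma Mark.code_injective : Function.Injective (Mark.code (τ := τ)) := fun m m' h =>
  (Fintype.equivFin (Mark τ)).injective (Fin.ext (by simpa [Mark.code] using h))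

@[simp] lemma Mark.code_inj {m m' : Mark τ} : m.code = m'.code ↔ m = m' :=
  Mark.code_injective.eq_iff

def Mark.tok (m : Mark τ) : Tok := .mark m.code

@[simp] lemma Mark.tok_inj {m m' : Mark τ} : m.tok = m'.tok ↔ m = m' :=
  ⟨fun h => Mark.code_injective (Tok.mark.inj h), congrArg _⟩

@[simp] lemma Mark.tok_ne_letter (m : Mark τ) (a : RNABase) : m.tok ≠ .letter a := Tok.noConfusion

variable (τ) in
def filler : List Tok := [(fill : Mark τ).tok, (fill : Mark τ).tok, (fillEnd : Mark τ).tok]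

def Pos.tail : Pos τ → List Tok
  | p@start => [(lead p).tok, (lead p).tok] ++ filler τ
  | p@(slot _ a) => [.letter a, (lead p).tok, (lead p).tok] ++ filler τ
  | p@final => [.letter .G, .letter .G, (lead p).tok] ++ filler τ

def Pos.unit (p : Pos τ) : List Tok := (entry p).tok :: p.tail

variable (τ) in
def pieces : List (List Tok) :=
  (start : Pos τ).tail ::
    ((Finset.univ : Finset (τ × RNABase)).toList.map fun qa => (slot qa.1 qa.2).unit) ++
    [(final : Pos τ).unit]

variable (τ) in
def template : List Tok := (pieces τ).flatten

variable (τ) in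
def power (K : ℕ) : List Tok := (replicate K (template τ)).flatten

variable (τ) in
def word : List RNABase := flat (template τ)

variable (τ) in
def terminator : List RNABase := marker (lead (final : Pos τ)).code

lemma Pos.tail_eq_kept (p : Pos τ) :
    ∃ rest, p.tail = p.kept.map .letter ++ (lead p).tok :: rest := by
  cases p <;> exact ⟨_, rfl⟩

lemma Pos.entry_tok_not_mem_tail (p p' : Pos τ) : (entry p).tok ∉ p'.tail := by
  cases p' <;> simp [Pos.tail, filler]

lemma Pos.dead_tok_not_mem_tail (p : Pos τ) : (dead : Mark τ).tok ∉ p.tail := by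
  cases p <;> simp [Pos.tail, filler]

lemma power_succ (K : ℕ) : power τ (K + 1) = template τ ++ power τ K := by
  simp [power, replicate_succ]

lemma flat_power (K : ℕ) : flat (power τ K) = (replicate K (word τ)).flatten := by
  induction K with
  | zero => rfl
  | succ K ih => rw [power_succ, flat_append, ih, replicate_succ, flatten_cons, word]

lemma eq_start_tail_or_unit_of_mem_pieces {l : List Tok} (hl : l ∈ pieces τ) :
    l = (start : Pos τ).tail ∨ ∃ p : Pos τ, l = p.unit := by
  simp only [pieces, mem_cons, mem_append, mem_map, not_mem_nil] at hl
  rcases hl with (rfl | ⟨qa, -, rfl⟩) | rfl | hl <;> simp_all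

lemma exists_template_eq_unit {p : Pos τ} (hp : p ≠ start) :
    ∃ pre S, template τ = pre ++ p.unit ++ S := by
  have hmem : p.unit ∈ pieces τ := by
    cases p <;> simp_all [pieces]
  obtain ⟨L₁, L₂, h⟩ := append_of_mem hmem
  exact ⟨L₁.flatten, L₂.flatten, by simp [template, h]⟩

variable (τ) in
structure TemplateLike (ts : List Tok) : Prop where
  chain : IsChain Tok.NotBothC ts
  followedBy : ∀ p : Pos τ, FollowedBy (entry p).tok p.tail ts
  dead_not_mem : (dead : Mark τ).tok ∉ ts

lemma TemplateLike.of_append_right {ts ts' : List Tok} (h : TemplateLike τ (ts ++ ts')) :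
    TemplateLike τ ts' :=
  ⟨h.chain.right_of_append, fun p => (h.followedBy p).of_append_right,
    fun hm => h.dead_not_mem (mem_append_right ts hm)⟩

lemma templateLike_power (K : ℕ) : TemplateLike τ (power τ K) := by
  have hpow : power τ K = (replicate K (pieces τ)).flatten.flatten := by
    simp [power, template, flatten_flatten, map_replicate]
  have hpiece (l) (hl : l ∈ (replicate K (pieces τ)).flatten) :
      l = (start : Pos τ).tail ∨ ∃ p : Pos τ, l = p.unit := by
    obtain ⟨L, hL, hl⟩ := mem_flatten.mp hl
    exact eq_start_tail_or_unit_of_mem_pieces (eq_of_mem_replicate hL ▸ hl)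
  rw [hpow]
  refine ⟨isChain_flatten_of_forall_getLast fun l hl => ?_,
    fun p => FollowedBy.flatten fun l hl => ?_, fun hm => ?_⟩
  · rcases hpiece l hl with rfl | ⟨p, rfl⟩
    · simp [Pos.tail, filler, Tok.NotBothC]
    · cases p <;> simp [Pos.unit, Pos.tail, filler, Tok.NotBothC]
  · rcases hpiece l hl with rfl | ⟨p', rfl⟩
    · exact followedBy_of_not_mem (p.entry_tok_not_mem_tail _)
    · by_cases hp : p = p'
      · subst hp
        exact followedBy_cons_self (p.entry_tok_not_mem_tail p)
      · exact followedBy_of_not_mem (by simp [Pos.unit, hp, p.entry_tok_not_mem_tail p'])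
  · obtain ⟨l, hl, hm⟩ := mem_flatten.mp hm
    rcases hpiece l hl with rfl | ⟨p, rfl⟩
    · exact start.dead_tok_not_mem_tail hm
    · simp [Pos.unit, p.dead_tok_not_mem_tail] at hm

variable (A : NFA RNABase τ)

def ctx : Set (List RNABase × List RNABase) :=
  (fun mm : Mark τ × Mark τ => (marker mm.1.code, marker mm.2.code)) '' {mm | Rule A mm.1 mm.2}

lemma ctx_finite : (ctx A).Finite := (Set.toFinite _).image _

variable {A} {n : ℕ}

lemma Edge.tail_eq {p p' : Pos τ} (e : Edge A p p') :
    p.tail = p.kept.map .letter ++ [(lead p).tok, (lead p).tok] ++ filler τ := by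
  cases e <;> rfl

lemma lead_mem_ctx (p : Pos τ) : (marker (lead p).code, marker (dead : Mark τ).code) ∈ ctx A :=
  ⟨(lead p, dead), .dead p, rfl⟩

lemma exists_rule_of_deletableBlock {b : List RNABase} (h : DeletableBlock id 1 (ctx A) n b) :
    ∃ m m' mid, Rule A m m' ∧ b = marker m.code ++ mid ++ marker m'.code := by
  obtain ⟨α, β, x, ℓ, z, ⟨⟨m, m'⟩, hr, he⟩, rfl, -, -⟩ := h
  obtain ⟨rfl, rfl⟩ := Prod.mk.inj he
  exact ⟨m, m', x ++ ℓ ++ thetaBar id (marker m.code ++ x) ++ z, hr, by simp⟩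

lemma deletableBlock_of_rule {m m' : Mark τ} (h : Rule A m m') {z : List RNABase}
    (hz : z.length ≤ n) :
    DeletableBlock id 1 (ctx A) n (marker m.code ++ marker m.code ++ z ++ marker m'.code) :=
  ⟨_, _, [], [], z, ⟨(m, m'), h, rfl⟩, by simp [thetaBar], by simp, hz⟩

lemma deletableBlock_filler : DeletableBlock id 1 (ctx A) n (flat (filler τ)) := by
  simpa [filler, Mark.tok, Tok.word] using
    deletableBlock_of_rule (A := A) .filler (z := []) (Nat.zero_le n)

lemma not_ctx_infix_of_length_le {u : List RNABase} (hu : u.length ≤ 2) :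
    ∀ ab ∈ ctx A, ¬ ab.1 <:+: u := by
  rintro _ ⟨⟨m, m'⟩, -, rfl⟩ hi
  have := hi.length_le
  have := m.two_le_code
  simp at *
  omega

lemma not_deletableBlock_infix_GG (b : List RNABase) (hb : DeletableBlock id 1 (ctx A) n b) :
    ¬ b <:+: [.G, .G] := by
  obtain ⟨m, m', mid, -, rfl⟩ := exists_rule_of_deletableBlock hb
  intro hi
  simpa using hi.subset (mem_append_left _ (mem_append_left _ (A_mem_marker m.code)))

lemma exists_edge_of_block {p : Pos τ} {S : List Tok} (hS : TemplateLike τ (p.tail ++ S))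
    {u₁ α v : List RNABase} (h : flat (p.tail ++ S) = u₁ ++ α ++ v)
    (hα : DeletableBlock id 1 (ctx A) n α) (hu₁ : ∀ ab ∈ ctx A, ¬ ab.1 <:+: u₁) :
    u₁ = p.kept ∧ ∃ p' S', Edge A p p' ∧ TemplateLike τ (p'.tail ++ S') ∧
      flat (p'.tail ++ S') = v := by
  obtain ⟨m, m', mid, hrule, rfl⟩ := exists_rule_of_deletableBlock hα
  obtain ⟨δ, ts, hδ, rfl, hts⟩ := exists_mark_of_flat_eq m.two_le_code hS.chain
    (s₁ := u₁) (s₂ := mid ++ marker m'.code ++ v) (by rw [h]; simp)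
  have hT : TemplateLike τ ts :=
    TemplateLike.of_append_right (ts := δ ++ [.mark m.code]) (by simpa [hδ] using hS)
  -- the hairpin must open at the first left context, which is `lead p`
  have hlead : (lead p).tok ∉ δ := fun hm =>
    hu₁ _ (lead_mem_ctx p) (by simpa [Mark.tok, Tok.word] using infix_flat_of_mem hm)
  obtain ⟨rest, hrest⟩ := p.tail_eq_kept
  rw [hrest, append_assoc, cons_append] at hδ
  obtain ⟨rfl, hm, -⟩ := eq_of_append_cons_eq_append_cons hδ hlead (by simp)
  obtain rfl := Mark.tok_inj.mp hm
  refine ⟨by simp, ?_⟩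
  obtain ⟨δ', ts', hts', -, rfl⟩ := exists_mark_of_flat_eq m'.two_le_code hT.chain
    (s₁ := mid) (by rw [hts])
  rcases hrule.eq_dead_or_edge with rfl | ⟨p', he, rfl⟩
  · exact absurd (hts' ▸ mem_append_right δ' mem_cons_self) hT.dead_not_mem
  · obtain ⟨S', rfl⟩ := hT.followedBy p' δ' ts' hts'
    refine ⟨p', S', he, ?_, rfl⟩
    exact TemplateLike.of_append_right (ts := δ' ++ [.mark (entry p').code])
      (by simpa [hts'] using hT)

lemma eq_final_of_not_deletableBlock_infix {p : Pos τ} {S : List Tok}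
    (hS : TemplateLike τ (p.tail ++ S)) {v R : List RNABase}
    (h : flat (p.tail ++ S) = v ++ terminator τ ++ R)
    (hv : ∀ b, DeletableBlock id 1 (ctx A) n b → ¬ b <:+: v) : p = final ∧ v = [.G, .G] := by
  obtain ⟨δ, ts, hδ, rfl, -⟩ := exists_mark_of_flat_eq (lead final).two_le_code hS.chain h
  have hfiller : ¬ filler τ <:+: δ := fun hi =>
    hv _ deletableBlock_filler (infix_flat_of_infix hi)
  cases p with
  | start | slot =>
    refine absurd ((suffix_append _ _).isInfix.trans
      (prefix_of_append_cons_eq hδ.symm ?_).isInfix) hfiller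
    simp [Pos.tail, filler, Mark.tok]
  | final =>
    obtain ⟨δ₁, rfl⟩ := prefix_of_append_cons_eq (pre := [.letter .G, .letter .G])
      (rest := (lead (final : Pos τ)).tok :: (filler τ ++ S))
      (hδ.symm.trans (by simp [Pos.tail, Mark.tok])) (by simp)
    rcases δ₁ with _ | ⟨t, δ₂⟩
    · exact ⟨rfl, rfl⟩
    · simp only [Pos.tail, cons_append, nil_append, cons.injEq, true_and] at hδ
      obtain ⟨F, rfl⟩ := prefix_of_append_cons_eq hδ.2.symm (by simp [filler, Mark.tok])
      exact absurd ⟨[.letter .G, .letter .G, t], F, by simp⟩ hfiller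

theorem reads_of_maxParDel {v u : List RNABase} (h : MaxParDel id 1 (ctx A) n v u) :
    ∀ {p : Pos τ} {S : List Tok} {R : List RNABase}, TemplateLike τ (p.tail ++ S) →
      flat (p.tail ++ S) = v ++ terminator τ ++ R → Reads A p u := by
  induction h with
  | last hv =>
    intro p S R hS h
    obtain ⟨rfl, rfl⟩ := eq_final_of_not_deletableBlock_infix hS h hv
    exact .final
  | @cons u₁ α v u hα hu₁ _ ih =>
    intro p S R hS h
    obtain ⟨rfl, p', S', he, hS', h'⟩ := exists_edge_of_block (v := v ++ terminator τ ++ R) hS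
      (by rw [h]; simp only [append_assoc]) hα hu₁
    exact .edge he (ih hS' h')

theorem exists_maxParDel_of_reads {p : Pos τ} {u : List RNABase} (h : Reads A p u) :
    ∀ {pre S : List Tok}, template τ = pre ++ p.tail ++ S →
      ∃ J v R, MaxParDel id 1 (ctx A) (2 * (word τ).length) v u ∧
        flat (p.tail ++ S ++ power τ J) = v ++ terminator τ ++ R := by
  induction h with
  | final =>
    intro pre S _
    exact ⟨0, [.G, .G], flat (filler τ ++ S), .last fun b hb => not_deletableBlock_infix_GG b hb,
      by simp [Pos.tail, power, terminator, Mark.tok, Tok.word]⟩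
  | @edge p p' u e _ ih =>
    intro pre S hT
    obtain ⟨pre', S', hT'⟩ := exists_template_eq_unit e.ne_start
    obtain ⟨J, v, R, hv, hflat⟩ :=
      ih (pre := pre' ++ [(entry p').tok]) (S := S') (by rw [hT']; simp [Pos.unit])
    have hz : (flat (filler τ ++ S ++ pre')).length ≤ 2 * (word τ).length := by
      have h₁ := congrArg (fun l => (flat l).length) hT
      have h₂ := congrArg (fun l => (flat l).length) hT'
      simp only [e.tail_eq, Pos.unit, flat_append, length_append, word] at h₁ h₂ ⊢
      omega
    refine ⟨J + 1, _, R, .cons (deletableBlock_of_rule (.edge e) hz)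
      (not_ctx_infix_of_length_le p.length_kept_le) hv, ?_⟩
    rw [power_succ, hT', e.tail_eq]
    simp only [Pos.unit, flat_append, flat_cons, flat_nil, append_assoc] at hflat ⊢
    simp [Mark.tok, Tok.word, hflat]

variable (A) in
theorem termObtainable_iff (r : List RNABase) :
    TermObtainable (word τ) id 1 (ctx A) (2 * (word τ).length) {terminator τ} 1 r ↔
      r ∈ A.accepts := by
  obtain ⟨S₀, hS₀⟩ : ∃ S, template τ = (start : Pos τ).tail ++ S := ⟨_, rfl⟩
  constructor
  · rintro ⟨K, t, w', rfl, ⟨R, hpre⟩, u, x, hmax, hx, rfl⟩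
    obtain ⟨b, rfl⟩ := length_eq_one_iff.mp hx
    rw [← flat_power] at hpre
    cases K with
    | zero => simp [power, terminator, marker] at hpre
    | succ K =>
      have hflat : flat ((start : Pos τ).tail ++ (S₀ ++ power τ K)) = w' ++ terminator τ ++ R := by
        rw [hpre, power_succ, hS₀, append_assoc]
      have hS : TemplateLike τ ((start : Pos τ).tail ++ (S₀ ++ power τ K)) := by
        simpa [power_succ, hS₀] using templateLike_power (τ := τ) (K + 1)
      obtain ⟨y, hy, hyu⟩ :=
        (reads_of_maxParDel (maxParObtained_iff_maxParDel.mp hmax) hS hflat).exists_mem_lang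
      have hyu' : r ++ [b, b] = y ++ [.G, .G] := by simpa [thetaBar] using hyu
      exact (append_inj' hyu' rfl).1 ▸ hy
  · intro hr
    obtain ⟨J, v, R, hv, hflat⟩ := exists_maxParDel_of_reads (reads_start_of_mem_accepts hr)
      (pre := []) (S := S₀) (by simpa using hS₀)
    refine ⟨J + 1, _, v, rfl, ⟨R, ?_⟩, _, [.G], maxParObtained_iff_maxParDel.mpr hv, rfl,
      by simp [thetaBar]⟩
    rw [← flat_power, power_succ, hS₀, ← hflat]

end

end HairpinNFA

/-- For every NFA `A` over the RNA alphabet with finitely many states there are a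
template word `w`, an involution `θ`, a logarithmic factor `c ≥ 1`, a finite context
set `C`, a margin `n`, a finite set `T` of terminating sequences, and a terminating
stem length `m ≥ 1`, such that the set of words obtainable from `w^ω` by terminating
maximally parallel log-hairpin deletion is exactly `L(A)`. -/
theorem nfa_simulated_by_terminating_maxpar_log_hairpin_deletion
    (σ : Type) [Fintype σ] (A : NFA RNABase σ) :
    ∃ (w : List RNABase) (θ : RNABase → RNABase) (c : ℕ)
      (C : Set (List RNABase × List RNABase)) (n : ℕ)
      (T : Set (List RNABase)) (m : ℕ),
      θ ∘ θ = id ∧ 1 ≤ c ∧ C.Finite ∧ T.Finite ∧ 1 ≤ m ∧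
      {r : List RNABase | TermObtainable w θ c C n T m r} = A.accepts := by
  refine ⟨HairpinNFA.word σ, id, 1, HairpinNFA.ctx A, 2 * (HairpinNFA.word σ).length,
    {HairpinNFA.terminator σ}, 1, rfl, le_rfl, HairpinNFA.ctx_finite A, Set.finite_singleton _,
    le_rfl, ?_⟩
  ext r
  exact HairpinNFA.termObtainable_iff A r
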